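/- arXiv:0804.2398 — 2 statements merged into one kernel-verified Lean document; each statement's English description precedes it below -/
import Mathlib

section
/- If a finite family of joint probability distributions {P_{(s₁,...,s_N)}} (with s_n ∈ Fin S_n, outcomes in finite sets Λ_n^{(s_n)}) admits an LHV model, i.e. there is a finite probability space (Ω, ν) and conditional distributions P_n^{(s_n)}(·|ω) with P_{(s₁,...,s_N)}(λ₁,...,λ_N) = Σ_ω ν(ω) ∏_n P_n^{(s_n)}(λ_n|ω), then there exists a single joint probability distribution μ on ∏_{n,s_n} Λ_n^{(s_n)} returning every P_{(s₁,...,s_N)} as the corresponding marginal. -/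
/-! Fine's construction: assign to every deterministic strategy `g`, which fixes an outcome
`g n s` for every party `n` and every setting `s`, the weight
`μ g = ∑ ω, ν ω * ∏ n, ∏ s, P_n^{(s)}(g n s | ω)`.
For fixed `ω` this is a product measure over all pairs `(n, s)`, so summing out every coordinate
except `(n, s n)` for each `n` leaves `∏ n, P_n^{(s n)}(λ n | ω)`; averaging over `ω` gives back
the LHV model. -/

open Finset

section ProductWeight

variable {ι : Type*} [Fintype ι] [DecidableEq ι] {β : ι → Type*} [∀ i, Fintype (β i)]
  {R : Type*} [CommSemiring R]

lemma sum_prod_eq_one {f : ∀ i, β i → R} (hf : ∀ i, ∑ x, f i x = 1) :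
    ∑ g : ∀ i, β i, ∏ i, f i (g i) = 1 := by
  rw [← Fintype.prod_sum]
  simp [hf]

lemma filter_forall_eq_piFinset (p : ∀ i, β i → Prop) [∀ i, DecidablePred (p i)]
    [DecidablePred fun g : ∀ i, β i ↦ ∀ i, p i (g i)] :
    ({g | ∀ i, p i (g i)} : Finset (∀ i, β i)) = Fintype.piFinset fun i ↦ {x | p i x} := by
  ext
  simp

lemma sum_filter_apply_eq_prod [∀ i, DecidableEq (β i)] {f : ∀ i, β i → R} (i₀ : ι) (x₀ : β i₀)
    (hf : ∀ i ≠ i₀, ∑ x, f i x = 1) :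
    ∑ g : ∀ i, β i with g i₀ = x₀, ∏ i, f i (g i) = f i₀ x₀ := by
  rw [← Fintype.piFinset_univ,
    ← Fintype.piFinset_update_singleton_eq_filter_piFinset_eq (fun _ ↦ univ) i₀ (mem_univ x₀),
    ← prod_univ_sum, prod_eq_single i₀ (fun i _ hi ↦ by simp [hi, hf i hi]) (by simp)]
  simp

lemma sum_ite_forall_apply_apply_eq_prod_prod {κ : ι → Type*} [∀ i, Fintype (κ i)]
    [∀ i, DecidableEq (κ i)] {γ : ∀ i, κ i → Type*} [∀ i k, Fintype (γ i k)]
    [∀ i k, DecidableEq (γ i k)] {f : ∀ i k, γ i k → R} (hf : ∀ i k, ∑ x, f i k x = 1)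
    (σ : ∀ i, κ i) (x : ∀ i, γ i (σ i))
    [DecidablePred fun g : ∀ i k, γ i k ↦ ∀ i, g i (σ i) = x i] :
    (∑ g : ∀ i k, γ i k, if ∀ i, g i (σ i) = x i then ∏ i, ∏ k, f i k (g i k) else 0) =
      ∏ i, f i (σ i) (x i) := by
  rw [← sum_filter, filter_forall_eq_piFinset fun i (gi : ∀ k, γ i k) ↦ gi (σ i) = x i,
    ← prod_univ_sum _ fun i (gi : ∀ k, γ i k) ↦ ∏ k, f i k (gi k)]
  exact prod_congr rfl fun i _ ↦ sum_filter_apply_eq_prod (σ i) (x i) fun k _ ↦ hf i k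

end ProductWeight

/-- If a finite family of joint probability distributions admits an LHV model,
then there exists a single joint probability distribution `μ` on the product of
all outcome sets returning every `P_{(s₁,...,s_N)}` as the corresponding marginal. -/
theorem lhv_implies_joint_distribution (N : ℕ) (S : Fin N → ℕ)
    (Λ : (n : Fin N) → Fin (S n) → Type)
    [∀ n s, Fintype (Λ n s)] [∀ n s, DecidableEq (Λ n s)]
    (P : (s : ∀ n, Fin (S n)) → ((n : Fin N) → Λ n (s n)) → ℝ)
    (Ω : Type) [Fintype Ω] (ν : Ω → ℝ)
    (hν0 : ∀ ω, 0 ≤ ν ω) (hν1 : ∑ ω, ν ω = 1)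
    (Pc : (n : Fin N) → (s : Fin (S n)) → Ω → Λ n s → ℝ)
    (hPc0 : ∀ n s ω lam, 0 ≤ Pc n s ω lam)
    (hPc1 : ∀ n s ω, ∑ lam, Pc n s ω lam = 1)
    (hfact : ∀ (s : ∀ n, Fin (S n)) (lam : (n : Fin N) → Λ n (s n)),
      P s lam = ∑ ω, ν ω * ∏ n, Pc n (s n) ω (lam n)) :
    ∃ μ : ((n : Fin N) → (s : Fin (S n)) → Λ n s) → ℝ,
      (∀ g, 0 ≤ μ g) ∧ (∑ g, μ g = 1) ∧
      ∀ (s : ∀ n, Fin (S n)) (lam : (n : Fin N) → Λ n (s n)),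
        P s lam = ∑ g, if (∀ n, g n (s n) = lam n) then μ g else 0 := by
  refine ⟨fun g ↦ ∑ ω, ν ω * ∏ n, ∏ s, Pc n s ω (g n s), fun g ↦ ?_, ?_, fun s lam ↦ ?_⟩
  · exact sum_nonneg fun ω _ ↦ mul_nonneg (hν0 ω)
      (prod_nonneg fun n _ ↦ prod_nonneg fun s _ ↦ hPc0 n s ω _)
  · rw [sum_comm]
    simp_rw [← mul_sum, sum_prod_eq_one fun n ↦ sum_prod_eq_one fun s ↦ hPc1 n s _, mul_one, hν1]
  · rw [← sum_filter, sum_comm, hfact]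
    simp_rw [← mul_sum, sum_filter,
      sum_ite_forall_apply_apply_eq_prod_prod fun n s ↦ hPc1 n s _]
end

section
/- For N-partite joint distributions with {-1,1} outcomes: if there exist a finite probability space (Ω,ν) and functions f_{n,s_n}: Ω → [-1,1] such that for every subset {n₁<...<n_M} ⊆ {1,...,N} and all settings, ⟨λ_{n₁}^{(s_{n₁})}···λ_{n_M}^{(s_{n_M})}⟩ = Σ_ω ν(ω) f_{n₁,s_{n₁}}(ω)···f_{n_M,s_{n_M}}(ω) (with the empty product giving 1), then the family admits an LHV model, with conditional distributions P_n^{(s_n)}({±1}|ω) = (1 ± f_{n,s_n}(ω))/2. -/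
/-!
The correlations `J ↦ ∑_λ (∏_{n ∈ J} λₙ) P(λ)` of a function `P` on `{-1,1}^N` are its
Fourier–Walsh coefficients, so they determine `P`: `2^N P(λ) = ∑_J (∏_{n ∈ J} λₙ) ⟨λ_J⟩`,
because `∑_J ∏_{n ∈ J} λₙ μₙ = ∏ₙ (1 + λₙ μₙ)` vanishes unless `μ = λ`. Expanding the
product-form candidate `∑_ω ν(ω) ∏ₙ (1 + λₙ fₙ(ω))/2` over subsets in the same way expresses it
through the numbers `∑_ω ν(ω) ∏_{n ∈ J} fₙ(ω)`, which by hypothesis are the correlations of `P`.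
-/

open Finset

section

variable {ι : Type*} [Fintype ι]

theorem prod_one_add_mul_eq_sum_powerset {R : Type*} [CommRing R] (a g : ι → R) :
    ∏ i, (1 + a i * g i) = ∑ J ∈ univ.powerset, (∏ i ∈ J, a i) * ∏ i ∈ J, g i := by
  rw [prod_one_add]
  exact sum_congr rfl fun J _ => prod_mul_distrib

theorem sum_mul_prod_one_add_mul_div_two {Ω K : Type*} [Fintype Ω] [Field K]
    (ν : Ω → K) (x : ι → K) (F : ι → Ω → K) :
    ∑ ω, ν ω * ∏ i, (1 + x i * F i ω) / 2
      = (2 ^ Fintype.card ι)⁻¹ *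
          ∑ J ∈ univ.powerset, (∏ i ∈ J, x i) * ∑ ω, ν ω * ∏ i ∈ J, F i ω := by
  calc _ = (2 ^ Fintype.card ι)⁻¹ *
          ∑ ω, ν ω * ∑ J ∈ univ.powerset, (∏ i ∈ J, x i) * ∏ i ∈ J, F i ω := by
        rw [mul_sum]
        refine sum_congr rfl fun ω _ => ?_
        rw [prod_div_distrib, prod_const, card_univ, prod_one_add_mul_eq_sum_powerset]
        ring
    _ = _ := by
        simp only [mul_sum]
        rw [sum_comm]
        exact sum_congr rfl fun _ _ => sum_congr rfl fun _ _ => by ring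

variable [DecidableEq ι] {R : Type*} [CommRing R]

theorem prod_one_add_mul_of_mem_piFinset {x y : ι → ℤ}
    (hx : x ∈ Fintype.piFinset fun _ : ι => ({-1, 1} : Finset ℤ))
    (hy : y ∈ Fintype.piFinset fun _ : ι => ({-1, 1} : Finset ℤ)) :
    ∏ i, (1 + (x i : R) * y i) = if x = y then 2 ^ Fintype.card ι else 0 := by
  have hx' : ∀ i, x i = -1 ∨ x i = 1 := by simpa using Fintype.mem_piFinset.mp hx
  have hy' : ∀ i, y i = -1 ∨ y i = 1 := by simpa using Fintype.mem_piFinset.mp hy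
  split_ifs with hxy
  · subst hxy
    calc ∏ i, (1 + (x i : R) * x i) = ∏ _i : ι, 2 :=
          Fintype.prod_congr _ _ fun i => by rcases hx' i with h | h <;> norm_num [h]
      _ = 2 ^ Fintype.card ι := by simp
  · obtain ⟨i, hi⟩ := Function.ne_iff.mp hxy
    refine prod_eq_zero (mem_univ i) ?_
    rcases hx' i with h | h <;> rcases hy' i with h' | h' <;> simp_all

theorem sum_powerset_mul_correlation {P : (ι → ℤ) → R} {x : ι → ℤ}
    (hx : x ∈ Fintype.piFinset fun _ : ι => ({-1, 1} : Finset ℤ)) :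
    ∑ J ∈ univ.powerset, (∏ i ∈ J, (x i : R)) *
        ∑ y ∈ Fintype.piFinset (fun _ : ι => ({-1, 1} : Finset ℤ)), (∏ i ∈ J, (y i : R)) * P y
      = 2 ^ Fintype.card ι * P x := by
  calc _ = ∑ y ∈ Fintype.piFinset (fun _ : ι => ({-1, 1} : Finset ℤ)),
          P y * ∏ i, (1 + (x i : R) * y i) := by
        simp only [mul_sum, prod_one_add_mul_eq_sum_powerset]
        rw [sum_comm]
        exact sum_congr rfl fun _ _ => sum_congr rfl fun _ _ => by ring
    _ = ∑ y ∈ Fintype.piFinset (fun _ : ι => ({-1, 1} : Finset ℤ)),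
          if x = y then P y * 2 ^ Fintype.card ι else 0 := by
        refine sum_congr rfl fun y hy => ?_
        rw [prod_one_add_mul_of_mem_piFinset hx hy, mul_ite, mul_zero]
    _ = 2 ^ Fintype.card ι * P x := by
        rw [sum_ite_eq, if_pos hx, mul_comm]

end

theorem correlations_lhv_form_implies_lhv_general (N : ℕ) (S : Fin N → ℕ)
    (P : (s : ∀ n, Fin (S n)) → (Fin N → ℤ) → ℝ)
    (Ω : Type) [Fintype Ω] (ν : Ω → ℝ)
    (f : (n : Fin N) → Fin (S n) → Ω → ℝ)
    (hcorr : ∀ (s : ∀ n, Fin (S n)) (J : Finset (Fin N)),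
      (∑ lam ∈ Fintype.piFinset (fun _ : Fin N => ({-1, 1} : Finset ℤ)),
          (∏ n ∈ J, (lam n : ℝ)) * P s lam)
        = ∑ ω, ν ω * ∏ n ∈ J, f n (s n) ω) :
    ∀ (s : ∀ n, Fin (S n)),
      ∀ lam ∈ Fintype.piFinset (fun _ : Fin N => ({-1, 1} : Finset ℤ)),
        P s lam = ∑ ω, ν ω * ∏ n, (1 + (lam n : ℝ) * f n (s n) ω) / 2 := by
  intro s lam hlam
  rw [sum_mul_prod_one_add_mul_div_two]
  simp only [← hcorr s]
  rw [sum_powerset_mul_correlation hlam, Fintype.card_fin, inv_mul_cancel_left₀]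
  positivity

/-- If all correlation functions of a family of N-partite joint distributions with
`±1`-valued outcomes admit an LHV-form representation through `[-1,1]`-valued
functions `f_{n,s_n}` on a common finite probability space, then the family admits
an LHV model with conditional distributions `P_n^{(s_n)}({±1}|ω) = (1 ± f_{n,s_n}(ω))/2`. -/
theorem correlations_lhv_form_implies_lhv (N : ℕ) (S : Fin N → ℕ)
    (P : (s : ∀ n, Fin (S n)) → (Fin N → ℤ) → ℝ)
    (hP0 : ∀ (s : ∀ n, Fin (S n)),
      ∀ lam ∈ Fintype.piFinset (fun _ : Fin N => ({-1, 1} : Finset ℤ)), 0 ≤ P s lam)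
    (hP1 : ∀ (s : ∀ n, Fin (S n)),
      ∑ lam ∈ Fintype.piFinset (fun _ : Fin N => ({-1, 1} : Finset ℤ)), P s lam = 1)
    (Ω : Type) [Fintype Ω] (ν : Ω → ℝ)
    (hν0 : ∀ ω, 0 ≤ ν ω) (hν1 : ∑ ω, ν ω = 1)
    (f : (n : Fin N) → Fin (S n) → Ω → ℝ)
    (hf : ∀ n s ω, |f n s ω| ≤ 1)
    (hcorr : ∀ (s : ∀ n, Fin (S n)) (J : Finset (Fin N)),
      (∑ lam ∈ Fintype.piFinset (fun _ : Fin N => ({-1, 1} : Finset ℤ)),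
          (∏ n ∈ J, (lam n : ℝ)) * P s lam)
        = ∑ ω, ν ω * ∏ n ∈ J, f n (s n) ω) :
    ∀ (s : ∀ n, Fin (S n)),
      ∀ lam ∈ Fintype.piFinset (fun _ : Fin N => ({-1, 1} : Finset ℤ)),
        P s lam = ∑ ω, ν ω * ∏ n, (1 + (lam n : ℝ) * f n (s n) ω) / 2 :=
  correlations_lhv_form_implies_lhv_general N S P Ω ν f hcorr
end
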